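/- arXiv:2309.05004 — 2 statements merged into one kernel-verified Lean document; each statement's English description precedes it below -/
import Mathlib

section
/- Let K be measurable with 0 ≤ K ≤ C_K, let f be a bounded measurable mild solution of the homogeneous kinetic equation with initial datum φ, 0 ≤ φ ≤ C_φ, and let μ₁, μ₂ ∈ L¹(ℝ). Let ḡ be a mild solution of the adjoint kinetic equation −∂_t ḡ − v ∂_x ḡ = L̃(ḡ) − σ ḡ with final datum ḡ(T,x,v) = μ₂(x) − μ₁(x). Then for every measurable set I ⊆ ℝ and all v, v' ∈ V: |∫₀^T ∫_I f(t,x,v') (ḡ(t,x,v') − ḡ(t,x,v)) dx dt| ≤ 2 C_φ T e^{4 C_K T} ‖μ₂ − μ₁‖_{L¹(ℝ)}. In particular, the difference of the adjoint-represented measurement gradients for two measurement test functions μ₁, μ₂ tends to 0 as ‖μ₂ − μ₁‖_{L¹} → 0. -/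
open MeasureTheory Real Set Filter

noncomputable section

/-- Bounded measurable mild solution of the forward kinetic equation
`∂ₜ f + v ∂ₓ f = 𝒦(f) + h`, `f(0,·,·)=φ`, on `[0,T] × ℝ × {−1,1}` (velocity set `V = {−1,1}`
with counting measure). -/
def IsMildF (T : ℝ) (K : ℝ → ℝ → ℝ → ℝ) (φ : ℝ → ℝ → ℝ)
    (h f : ℝ → ℝ → ℝ → ℝ) : Prop :=
  (Measurable fun p : ℝ × ℝ × ℝ => f p.1 p.2.1 p.2.2) ∧
  (∃ C : ℝ, ∀ t x v, |f t x v| ≤ C) ∧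
  ∀ t ∈ Set.Icc (0 : ℝ) T, ∀ x : ℝ, ∀ v ∈ ({1, -1} : Set ℝ),
    f t x v = φ (x - v * t) v +
      ∫ s in (0 : ℝ)..t,
        (K (x - v * (t - s)) v 1 * f s (x - v * (t - s)) 1
          + K (x - v * (t - s)) v (-1) * f s (x - v * (t - s)) (-1)
          - (K (x - v * (t - s)) 1 v + K (x - v * (t - s)) (-1) v)
              * f s (x - v * (t - s)) v
          + h s (x - v * (t - s)) v)

/-- Mild solution (measurable, with finite `L¹ₓ` norms uniformly in `t,v`) of the backward
equation `−∂ₜ g − v ∂ₓ g = α L̃(g) − σ g + h`, `g(T,·,·)=ψ`, where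
`σ(x,v) = Σ_{v'∈V} K(x,v',v)` and `L̃(g)(t,x,v) = Σ_{v'∈V} K(x,v',v) g(t,x,v')`. -/
def IsMildG (T : ℝ) (K : ℝ → ℝ → ℝ → ℝ) (α : ℝ) (ψ : ℝ → ℝ → ℝ)
    (h g : ℝ → ℝ → ℝ → ℝ) : Prop :=
  (Measurable fun p : ℝ × ℝ × ℝ => g p.1 p.2.1 p.2.2) ∧
  (∀ t ∈ Set.Icc (0 : ℝ) T, ∀ v ∈ ({1, -1} : Set ℝ),
    Integrable (fun x => g t x v)) ∧
  (∃ C : ℝ, ∀ t ∈ Set.Icc (0 : ℝ) T, ∀ v ∈ ({1, -1} : Set ℝ),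
    (∫ x : ℝ, |g t x v|) ≤ C) ∧
  ∀ t ∈ Set.Icc (0 : ℝ) T, ∀ x : ℝ, ∀ v ∈ ({1, -1} : Set ℝ),
    g t x v = ψ (x + v * (T - t)) v +
      ∫ s in t..T,
        (α * (K (x + v * (s - t)) 1 v * g s (x + v * (s - t)) 1
              + K (x + v * (s - t)) (-1) v * g s (x + v * (s - t)) (-1))
          - (K (x + v * (s - t)) 1 v + K (x + v * (s - t)) (-1) v)
              * g s (x + v * (s - t)) v
          + h s (x + v * (s - t)) v)

/-- Bounded measurable mild solution of the backward/adjoint equation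
`−∂ₜ g − v ∂ₓ g = α L̃(g) − σ g + h`, `g(T,·,·)=ψ`. -/
def IsMildGb (T : ℝ) (K : ℝ → ℝ → ℝ → ℝ) (α : ℝ) (ψ : ℝ → ℝ → ℝ)
    (h g : ℝ → ℝ → ℝ → ℝ) : Prop :=
  (Measurable fun p : ℝ × ℝ × ℝ => g p.1 p.2.1 p.2.2) ∧
  (∃ C : ℝ, ∀ t x v, |g t x v| ≤ C) ∧
  ∀ t ∈ Set.Icc (0 : ℝ) T, ∀ x : ℝ, ∀ v ∈ ({1, -1} : Set ℝ),
    g t x v = ψ (x + v * (T - t)) v +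
      ∫ s in t..T,
        (α * (K (x + v * (s - t)) 1 v * g s (x + v * (s - t)) 1
              + K (x + v * (s - t)) (-1) v * g s (x + v * (s - t)) (-1))
          - (K (x + v * (s - t)) 1 v + K (x + v * (s - t)) (-1) v)
              * g s (x + v * (s - t)) v
          + h s (x + v * (s - t)) v)

/-!
Both solutions are controlled by a Grönwall argument along characteristics. In the collision
term the gain and the loss parts are each bounded by `2 C_K` times the size of the solution, so
`|f t x v| ≤ C_φ e^{4 C_K t}`; integrating the adjoint mild formula in `x` (Tonelli and
translation invariance) gives, backwards in time,
`‖ḡ(t,·,1)‖₁ + ‖ḡ(t,·,-1)‖₁ ≤ 2 ‖μ₂ - μ₁‖₁ e^{4 C_K (T - t)}`.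
In the pairing of `f` with `ḡ` the two exponents add up to `4 C_K T` at every time, and the
time integral contributes the factor `T`.
-/

theorem integral_mul_exp_add_exp (A L ε t : ℝ) :
    ∫ s in (0 : ℝ)..t, L * (A * exp (L * s) + ε * exp (2 * L * s)) =
      A * (exp (L * t) - 1) + ε / 2 * (exp (2 * L * t) - 1) := by
  have hderiv : ∀ s, HasDerivAt (fun s => A * exp (L * s) + ε / 2 * exp (2 * L * s))
      (L * (A * exp (L * s) + ε * exp (2 * L * s))) s := by
    intro s
    have h₁ := ((hasDerivAt_id s).const_mul L).exp.const_mul A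
    have h₂ := ((hasDerivAt_id s).const_mul (2 * L)).exp.const_mul (ε / 2)
    exact (h₁.add h₂).congr_deriv (by simp only [id]; ring)
  rw [intervalIntegral.integral_eq_sub_of_hasDerivAt (fun s _ => hderiv s)
    (by apply Continuous.intervalIntegrable; fun_prop)]
  simp only [mul_zero, exp_zero]
  ring

theorem le_mul_exp_of_forall_le_add_integral {ι : Type*} {w : ℝ → ι → ℝ} {τ A L : ℝ}
    (hA : 0 ≤ A) (hL : 0 ≤ L) (hbdd : ∃ C, ∀ t ∈ Icc 0 τ, ∀ i, w t i ≤ C)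
    (hstep : ∀ b : ℝ → ℝ, Continuous b → (∀ s, 0 ≤ b s) → ∀ t ∈ Icc 0 τ,
      (∀ s ∈ Icc 0 t, ∀ i, w s i ≤ b s) → ∀ i, w t i ≤ A + ∫ s in (0 : ℝ)..t, L * b s) :
    ∀ t ∈ Icc 0 τ, ∀ i, w t i ≤ A * exp (L * t) := by
  obtain ⟨C, hC⟩ := hbdd
  -- Each iteration of the integral inequality halves the excess over `A * exp (L * t)`,
  -- measured against the faster-growing weight `exp (2 * L * t)`.
  have hiter : ∀ n : ℕ, ∀ t ∈ Icc 0 τ, ∀ i,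
      w t i ≤ A * exp (L * t) + max C 0 * 2⁻¹ ^ n * exp (2 * L * t) := by
    intro n
    induction n with
    | zero =>
      intro t ht i
      have : 1 ≤ exp (2 * L * t) := one_le_exp (by have := ht.1; positivity)
      have : 0 ≤ A * exp (L * t) := by positivity
      nlinarith [hC t ht i, le_max_left C 0, le_max_right C 0]
    | succ n ih =>
      intro t ht i
      have hε : 0 ≤ max C 0 * 2⁻¹ ^ n := by positivity
      refine (hstep (fun s => A * exp (L * s) + max C 0 * 2⁻¹ ^ n * exp (2 * L * s)) (by fun_prop)
        (fun s => by positivity) t ht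
        (fun s hs => ih s ⟨hs.1, hs.2.trans ht.2⟩) i).trans ?_
      rw [integral_mul_exp_add_exp, pow_succ, ← mul_assoc]
      linarith
  intro t ht i
  refine ge_of_tendsto' (x := atTop) ?_ (fun n => hiter n t ht i)
  have hpow : Tendsto (fun n : ℕ => (2⁻¹ : ℝ) ^ n) atTop (nhds 0) :=
    tendsto_pow_atTop_nhds_zero_of_lt_one (by norm_num) (by norm_num)
  have := ((hpow.const_mul (max C 0)).mul_const (exp (2 * L * t))).const_add (A * exp (L * t))
  simpa using this

theorem abs_collision_le {κ a b c k₁ k₂ k₃ k₄ : ℝ} (h₁ : |k₁| ≤ κ) (h₂ : |k₂| ≤ κ)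
    (h₃ : |k₃| ≤ κ) (h₄ : |k₄| ≤ κ) :
    |k₁ * a + k₂ * b - (k₃ + k₄) * c| ≤ κ * |a| + κ * |b| + 2 * κ * |c| := by
  calc |k₁ * a + k₂ * b - (k₃ + k₄) * c|
      ≤ |k₁| * |a| + |k₂| * |b| + (|k₃| + |k₄|) * |c| := by
        rw [← abs_mul, ← abs_mul]
        refine (abs_sub _ _).trans (add_le_add (abs_add_le _ _) ?_)
        rw [abs_mul]
        gcongr
        exact abs_add_le _ _
    _ ≤ κ * |a| + κ * |b| + (κ + κ) * |c| := by gcongr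
    _ = κ * |a| + κ * |b| + 2 * κ * |c| := by ring

section Forward

variable {T CK Cφ : ℝ} {K : ℝ → ℝ → ℝ → ℝ} {φ : ℝ → ℝ → ℝ} {f : ℝ → ℝ → ℝ → ℝ}

theorem IsMildF.abs_le_add_integral (hK : ∀ x v v', |K x v v'| ≤ CK) (hφ : ∀ x v, |φ x v| ≤ Cφ)
    (hf : IsMildF T K φ (fun _ _ _ => 0) f) {b : ℝ → ℝ} (hb : Continuous b)
    {t : ℝ} (ht : t ∈ Icc 0 T)
    (hfb : ∀ s ∈ Icc 0 t, ∀ y, ∀ w ∈ ({1, -1} : Set ℝ), |f s y w| ≤ b s)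
    (x : ℝ) {v : ℝ} (hv : v ∈ ({1, -1} : Set ℝ)) :
    |f t x v| ≤ Cφ + ∫ s in (0 : ℝ)..t, 4 * CK * b s := by
  have hcollision : ∀ s ∈ Ioc 0 t, ‖K (x - v * (t - s)) v 1 * f s (x - v * (t - s)) 1
      + K (x - v * (t - s)) v (-1) * f s (x - v * (t - s)) (-1)
      - (K (x - v * (t - s)) 1 v + K (x - v * (t - s)) (-1) v) * f s (x - v * (t - s)) v
      + 0‖ ≤ 4 * CK * b s := by
    intro s hs
    have hs' : s ∈ Icc 0 t := Ioc_subset_Icc_self hs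
    rw [add_zero, Real.norm_eq_abs]
    refine (abs_collision_le (hK _ _ _) (hK _ _ _) (hK _ _ _) (hK _ _ _)).trans ?_
    have h₁ := hfb s hs' (x - v * (t - s)) 1 (by simp)
    have h₂ := hfb s hs' (x - v * (t - s)) (-1) (by simp)
    have h₃ := hfb s hs' (x - v * (t - s)) v hv
    have hCK : 0 ≤ CK := (abs_nonneg _).trans (hK 0 0 0)
    nlinarith
  rw [hf.2.2 t ht x v hv]
  refine (abs_add_le _ _).trans (add_le_add (hφ _ _) ?_)
  exact intervalIntegral.norm_integral_le_of_norm_le ht.1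
    (Eventually.of_forall hcollision) (by apply Continuous.intervalIntegrable; fun_prop)

theorem IsMildF.abs_le_mul_exp (hK : ∀ x v v', |K x v v'| ≤ CK) (hφ : ∀ x v, |φ x v| ≤ Cφ)
    (hf : IsMildF T K φ (fun _ _ _ => 0) f) :
    ∀ t ∈ Icc 0 T, ∀ x, ∀ v ∈ ({1, -1} : Set ℝ), |f t x v| ≤ Cφ * exp (4 * CK * t) := by
  obtain ⟨C, hC⟩ := hf.2.1
  have key := le_mul_exp_of_forall_le_add_integral
    (w := fun t (p : ℝ × ({1, -1} : Set ℝ)) => |f t p.1 p.2|)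
    ((abs_nonneg _).trans (hφ 0 0)) (by have := (abs_nonneg _).trans (hK 0 0 0); positivity)
    ⟨C, fun t _ p => hC _ _ _⟩
    (fun b hb _ t ht hfb p => hf.abs_le_add_integral hK hφ hb ht
      (fun s hs y w hw => hfb s hs (y, ⟨w, hw⟩)) p.1 p.2.2)
  exact fun t ht x v hv => key t ht (x, ⟨v, hv⟩)

end Forward

section Adjoint

variable {T CK : ℝ} {K : ℝ → ℝ → ℝ → ℝ} {μ : ℝ → ℝ} {g : ℝ → ℝ → ℝ → ℝ}

theorem IsMildG.apply_final {α : ℝ} {ψ : ℝ → ℝ → ℝ} {h : ℝ → ℝ → ℝ → ℝ} (hT : 0 ≤ T)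
    (hg : IsMildG T K α ψ h g) (x : ℝ) {v : ℝ} (hv : v ∈ ({1, -1} : Set ℝ)) :
    g T x v = ψ x v := by
  simpa using hg.2.2.2 T ⟨hT, le_rfl⟩ x v hv

theorem IsMildG.enorm_le (hK : ∀ x v v', |K x v v'| ≤ CK)
    (hg : IsMildG T K 1 (fun x _ => μ x) (fun _ _ _ => 0) g) {t : ℝ} (ht : t ∈ Icc 0 T)
    (x : ℝ) {v : ℝ} (hv : v ∈ ({1, -1} : Set ℝ)) :
    ‖g t x v‖ₑ ≤ ‖μ (x + v * (T - t))‖ₑ + ∫⁻ s in Ioc t T, ENNReal.ofReal CK *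
      (‖g s (x + v * (s - t)) 1‖ₑ + ‖g s (x + v * (s - t)) (-1)‖ₑ
        + 2 * ‖g s (x + v * (s - t)) v‖ₑ) := by
  have hCK : 0 ≤ CK := (abs_nonneg _).trans (hK 0 0 0)
  rw [hg.2.2.2 t ht x v hv, intervalIntegral.integral_of_le ht.2]
  refine (enorm_add_le _ _).trans (add_le_add le_rfl
    ((enorm_integral_le_lintegral_enorm _).trans (lintegral_mono fun s => ?_)))
  rw [one_mul, add_zero, Real.enorm_eq_ofReal_abs]
  refine (ENNReal.ofReal_le_ofReal
    (abs_collision_le (hK _ _ _) (hK _ _ _) (hK _ _ _) (hK _ _ _))).trans_eq ?_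
  simp only [Real.enorm_eq_ofReal_abs]
  rw [← ENNReal.ofReal_ofNat 2, ← ENNReal.ofReal_mul (by norm_num),
    ← ENNReal.ofReal_add (abs_nonneg _) (abs_nonneg _),
    ← ENNReal.ofReal_add (by positivity) (by positivity), ← ENNReal.ofReal_mul hCK]
  ring_nf

theorem IsMildG.lintegral_enorm_le (hK : ∀ x v v', |K x v v'| ≤ CK)
    (hg : IsMildG T K 1 (fun x _ => μ x) (fun _ _ _ => 0) g) {t : ℝ} (ht : t ∈ Icc 0 T)
    {v : ℝ} (hv : v ∈ ({1, -1} : Set ℝ)) :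
    ∫⁻ x, ‖g t x v‖ₑ ≤ (∫⁻ x, ‖μ x‖ₑ) + ∫⁻ s in Ioc t T, ENNReal.ofReal CK *
      ((∫⁻ x, ‖g s x 1‖ₑ) + (∫⁻ x, ‖g s x (-1)‖ₑ) + 2 * ∫⁻ x, ‖g s x v‖ₑ) := by
  have hg_meas : Measurable fun p : ℝ × ℝ × ℝ => g p.1 p.2.1 p.2.2 := hg.1
  have hμ : Measurable μ := by
    have : Measurable fun x => g T x 1 := hg_meas.comp (f := fun x => (T, x, 1)) (by fun_prop)
    simpa only [hg.apply_final (ht.1.trans ht.2) _ (by simp : (1 : ℝ) ∈ _)] using this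
  calc ∫⁻ x, ‖g t x v‖ₑ
      ≤ ∫⁻ x, (‖μ (x + v * (T - t))‖ₑ + ∫⁻ s in Ioc t T, ENNReal.ofReal CK *
          (‖g s (x + v * (s - t)) 1‖ₑ + ‖g s (x + v * (s - t)) (-1)‖ₑ
            + 2 * ‖g s (x + v * (s - t)) v‖ₑ)) :=
        lintegral_mono fun x => hg.enorm_le hK ht x hv
    _ = (∫⁻ x, ‖μ x‖ₑ) + ∫⁻ s in Ioc t T, ∫⁻ x, ENNReal.ofReal CK *
          (‖g s (x + v * (s - t)) 1‖ₑ + ‖g s (x + v * (s - t)) (-1)‖ₑ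
            + 2 * ‖g s (x + v * (s - t)) v‖ₑ) := by
        have hμ_shift : Measurable fun x => ‖μ (x + v * (T - t))‖ₑ :=
          (hμ.comp (measurable_add_const _)).enorm
        rw [lintegral_add_left hμ_shift,
          lintegral_add_right_eq_self (fun x => ‖μ x‖ₑ),
          lintegral_lintegral_swap (by fun_prop)]
    _ = _ := by
        congr 1
        refine setLIntegral_congr_fun measurableSet_Ioc fun s _ => ?_
        rw [lintegral_const_mul _ (by fun_prop), lintegral_add_left (by fun_prop),
          lintegral_add_left (by fun_prop), lintegral_const_mul _ (by fun_prop)]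
        rw [lintegral_add_right_eq_self (fun x => ‖g s x 1‖ₑ),
          lintegral_add_right_eq_self (fun x => ‖g s x (-1)‖ₑ),
          lintegral_add_right_eq_self (fun x => ‖g s x v‖ₑ)]

theorem IsMildG.ofReal_integral_abs_add_le (hK : ∀ x v v', |K x v v'| ≤ CK)
    (hg : IsMildG T K 1 (fun x _ => μ x) (fun _ _ _ => 0) g) {t : ℝ} (ht : t ∈ Icc 0 T) :
    ENNReal.ofReal ((∫ x, |g t x 1|) + ∫ x, |g t x (-1)|) ≤
      ENNReal.ofReal (2 * ∫ x, |μ x|) + ∫⁻ s in Ioc t T,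
        ENNReal.ofReal (4 * CK * ((∫ x, |g s x 1|) + ∫ x, |g s x (-1)|)) := by
  have hCK : 0 ≤ CK := (abs_nonneg _).trans (hK 0 0 0)
  have h₁ : (1 : ℝ) ∈ ({1, -1} : Set ℝ) := by simp
  have h₂ : (-1 : ℝ) ∈ ({1, -1} : Set ℝ) := by simp
  have hμ : Integrable μ := by
    have hT : 0 ≤ T := ht.1.trans ht.2
    simpa only [hg.apply_final hT _ h₁] using hg.2.1 T ⟨hT, le_rfl⟩ 1 h₁
  have hlintegral : ∀ s ∈ Icc 0 T, ∀ w ∈ ({1, -1} : Set ℝ),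
      ENNReal.ofReal (∫ x, |g s x w|) = ∫⁻ x, ‖g s x w‖ₑ :=
    fun s hs w hw => ofReal_integral_norm_eq_lintegral_enorm (hg.2.1 s hs w hw)
  have hsum : ∀ s ∈ Icc 0 T, ENNReal.ofReal (4 * CK * ((∫ x, |g s x 1|) + ∫ x, |g s x (-1)|)) =
      ENNReal.ofReal CK * ((∫⁻ x, ‖g s x 1‖ₑ) + (∫⁻ x, ‖g s x (-1)‖ₑ) + 2 * ∫⁻ x, ‖g s x 1‖ₑ) +
      ENNReal.ofReal CK *
        ((∫⁻ x, ‖g s x 1‖ₑ) + (∫⁻ x, ‖g s x (-1)‖ₑ) + 2 * ∫⁻ x, ‖g s x (-1)‖ₑ) := by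
    intro s hs
    rw [ENNReal.ofReal_mul (by positivity), ENNReal.ofReal_mul (by norm_num),
      ENNReal.ofReal_add (integral_nonneg fun _ => abs_nonneg _)
        (integral_nonneg fun _ => abs_nonneg _), hlintegral s hs 1 h₁, hlintegral s hs (-1) h₂,
      ENNReal.ofReal_ofNat]
    ring
  have hslice : ∀ w : ℝ, Measurable fun s => ∫⁻ x, ‖g s x w‖ₑ := fun w =>
    (hg.1.comp (f := fun p : ℝ × ℝ => (p.1, p.2, w)) (by fun_prop)).enorm.lintegral_prod_right'
  rw [ENNReal.ofReal_add (integral_nonneg fun _ => abs_nonneg _)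
      (integral_nonneg fun _ => abs_nonneg _), hlintegral t ht 1 h₁, hlintegral t ht (-1) h₂,
    ENNReal.ofReal_mul (by norm_num), ENNReal.ofReal_ofNat,
    show ENNReal.ofReal (∫ x, |μ x|) = ∫⁻ x, ‖μ x‖ₑ from ofReal_integral_norm_eq_lintegral_enorm hμ,
    setLIntegral_congr_fun measurableSet_Ioc fun s hs => hsum s ⟨ht.1.trans hs.1.le, hs.2⟩,
    lintegral_add_left (by fun_prop)]
  calc _ ≤ _ := add_le_add (hg.lintegral_enorm_le hK ht h₁) (hg.lintegral_enorm_le hK ht h₂)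
    _ = _ := by ring

theorem IsMildG.integral_abs_add_le_mul_exp (hK : ∀ x v v', |K x v v'| ≤ CK)
    (hg : IsMildG T K 1 (fun x _ => μ x) (fun _ _ _ => 0) g) :
    ∀ t ∈ Icc 0 T, (∫ x, |g t x 1|) + ∫ x, |g t x (-1)| ≤
      2 * (∫ x, |μ x|) * exp (4 * CK * (T - t)) := by
  set n : ℝ → ℝ := fun s => (∫ x, |g s x 1|) + ∫ x, |g s x (-1)|
  have hCK : 0 ≤ CK := (abs_nonneg _).trans (hK 0 0 0)
  have hM : 0 ≤ 2 * ∫ x, |μ x| := by positivity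
  have hreflect : ∀ t ∈ Icc (0 : ℝ) T, T - t ∈ Icc 0 T := fun t ht =>
    ⟨by linarith [ht.2], by linarith [ht.1]⟩
  -- Grönwall is run in the reversed time `T - t`, in which the adjoint equation is forward.
  have key := le_mul_exp_of_forall_le_add_integral (τ := T) (w := fun t (_ : Unit) => n (T - t))
    hM (by positivity : 0 ≤ 4 * CK) ?_ ?_
  · intro t ht
    simpa using key (T - t) (hreflect t ht) ()
  · obtain ⟨C, hC⟩ := hg.2.2.1
    exact ⟨C + C, fun t ht _ => add_le_add (hC _ (hreflect t ht) 1 (by simp))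
      (hC _ (hreflect t ht) (-1) (by simp))⟩
  · intro b hb hb0 t ht hnb _
    have hbound : ∀ s ∈ Ioc (T - t) T,
        ENNReal.ofReal (4 * CK * n s) ≤ ENNReal.ofReal (4 * CK * b (T - s)) := by
      intro s hs
      refine ENNReal.ofReal_le_ofReal (mul_le_mul_of_nonneg_left ?_ (by positivity))
      simpa using hnb (T - s) ⟨by linarith [hs.2], by linarith [hs.1]⟩ ()
    have hintegral : ∫⁻ s in Ioc (T - t) T, ENNReal.ofReal (4 * CK * b (T - s)) =
        ENNReal.ofReal (∫ s in (0 : ℝ)..t, 4 * CK * b s) := by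
      rw [← ofReal_integral_eq_lintegral_ofReal (Continuous.integrableOn_Ioc (by fun_prop))
        (Eventually.of_forall fun s => by have := hb0 (T - s); positivity),
        ← intervalIntegral.integral_of_le (by linarith [ht.1]),
        intervalIntegral.integral_comp_sub_left (fun s => 4 * CK * b s), sub_self, sub_sub_cancel]
    have := (hg.ofReal_integral_abs_add_le hK (hreflect t ht)).trans
      (add_le_add le_rfl ((setLIntegral_mono' measurableSet_Ioc hbound).trans_eq hintegral))
    rwa [← ENNReal.ofReal_add hM (intervalIntegral.integral_nonneg ht.1
      fun s _ => by have := hb0 s; positivity), ENNReal.ofReal_le_ofReal_iff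
      (add_nonneg hM (intervalIntegral.integral_nonneg ht.1 fun s _ => by
        have := hb0 s; positivity))] at this

end Adjoint

theorem abs_setIntegral_mul_sub_le {α : Type*} [MeasurableSpace α] {ν : Measure α}
    {F G₁ G₂ : α → ℝ} {c : ℝ} (hc : 0 ≤ c) (hF : ∀ᵐ x ∂ν, |F x| ≤ c)
    (h₁ : Integrable G₁ ν) (h₂ : Integrable G₂ ν) (I : Set α) :
    |∫ x in I, F x * (G₁ x - G₂ x) ∂ν| ≤ c * ((∫ x, |G₁ x| ∂ν) + ∫ x, |G₂ x| ∂ν) := by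
  have hdom : Integrable (fun x => c * (|G₁ x| + |G₂ x|)) ν := (h₁.abs.add h₂.abs).const_mul c
  calc |∫ x in I, F x * (G₁ x - G₂ x) ∂ν|
      ≤ ∫ x in I, c * (|G₁ x| + |G₂ x|) ∂ν := by
        refine norm_integral_le_of_norm_le (f := fun x => F x * (G₁ x - G₂ x))
          hdom.integrableOn (ae_restrict_of_ae ?_)
        filter_upwards [hF] with x hx
        rw [Real.norm_eq_abs, abs_mul]
        exact mul_le_mul hx (abs_sub _ _) (abs_nonneg _) hc
    _ ≤ ∫ x, c * (|G₁ x| + |G₂ x|) ∂ν :=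
        setIntegral_le_integral hdom (ae_of_all _ fun x => by positivity)
    _ = c * ((∫ x, |G₁ x| ∂ν) + ∫ x, |G₂ x| ∂ν) := by
        rw [integral_const_mul, integral_add h₁.abs h₂.abs]

theorem abs_integral_setIntegral_mul_sub_le {T CK Cφ : ℝ} {K : ℝ → ℝ → ℝ → ℝ}
    {φ : ℝ → ℝ → ℝ} {f g : ℝ → ℝ → ℝ → ℝ} {μ : ℝ → ℝ} (hT : 0 ≤ T)
    (hK : ∀ x v v', |K x v v'| ≤ CK) (hφ : ∀ x v, |φ x v| ≤ Cφ)
    (hf : IsMildF T K φ (fun _ _ _ => 0) f)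
    (hg : IsMildG T K 1 (fun x _ => μ x) (fun _ _ _ => 0) g) (I : Set ℝ)
    {v v' : ℝ} (hv : v ∈ ({1, -1} : Set ℝ)) (hv' : v' ∈ ({1, -1} : Set ℝ)) :
    |∫ t in (0 : ℝ)..T, ∫ x in I, f t x v' * (g t x v' - g t x v)|
      ≤ 2 * Cφ * T * exp (4 * CK * T) * ∫ x, |μ x| := by
  have hCφ : 0 ≤ Cφ := (abs_nonneg _).trans (hφ 0 0)
  rcases eq_or_ne v v' with rfl | hvv
  · simp only [sub_self, mul_zero, integral_zero, intervalIntegral.integral_zero, abs_zero]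
    positivity
  have hpair : ∀ t, (∫ x, |g t x v'|) + ∫ x, |g t x v| = (∫ x, |g t x 1|) + ∫ x, |g t x (-1)| := by
    intro t
    rcases hv with rfl | rfl <;> rcases hv' with rfl | rfl <;> first | exact absurd rfl hvv | ring
  have hslice : ∀ t ∈ uIoc 0 T, ‖∫ x in I, f t x v' * (g t x v' - g t x v)‖
      ≤ 2 * Cφ * exp (4 * CK * T) * ∫ x, |μ x| := by
    intro t ht
    rw [uIoc_of_le hT] at ht
    replace ht : t ∈ Icc 0 T := Ioc_subset_Icc_self ht
    calc ‖∫ x in I, f t x v' * (g t x v' - g t x v)‖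
        ≤ Cφ * exp (4 * CK * t) * ((∫ x, |g t x v'|) + ∫ x, |g t x v|) :=
          abs_setIntegral_mul_sub_le (by positivity)
            (ae_of_all _ fun x => hf.abs_le_mul_exp hK hφ t ht x v' hv')
            (hg.2.1 t ht v' hv') (hg.2.1 t ht v hv) I
      _ ≤ Cφ * exp (4 * CK * t) * (2 * (∫ x, |μ x|) * exp (4 * CK * (T - t))) := by
          rw [hpair]
          gcongr
          exact hg.integral_abs_add_le_mul_exp hK t ht
      _ = 2 * Cφ * exp (4 * CK * T) * ∫ x, |μ x| := by
          rw [show 4 * CK * T = 4 * CK * t + 4 * CK * (T - t) by ring, exp_add]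
          ring
  calc |∫ t in (0 : ℝ)..T, ∫ x in I, f t x v' * (g t x v' - g t x v)|
      ≤ 2 * Cφ * exp (4 * CK * T) * (∫ x, |μ x|) * |T - 0| :=
        intervalIntegral.norm_integral_le_of_norm_le_const hslice
    _ = 2 * Cφ * T * exp (4 * CK * T) * ∫ x, |μ x| := by
        rw [sub_zero, abs_of_nonneg hT]
        ring

theorem gradient_closeness_L1_general
    (T CK Cφ : ℝ) (hT : 0 < T)
    (K : ℝ → ℝ → ℝ → ℝ)
    (hK_nonneg : ∀ x v v', 0 ≤ K x v v') (hK_bdd : ∀ x v v', K x v v' ≤ CK)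
    (φ : ℝ → ℝ → ℝ) (hφ_bds : ∀ x v, 0 ≤ φ x v ∧ φ x v ≤ Cφ)
    (f : ℝ → ℝ → ℝ → ℝ) (hf : IsMildF T K φ (fun _ _ _ => 0) f)
    (μ₁ μ₂ : ℝ → ℝ)
    (gbar : ℝ → ℝ → ℝ → ℝ)
    (hgbar : IsMildG T K 1 (fun x _ => μ₂ x - μ₁ x) (fun _ _ _ => 0) gbar) :
    (∀ I : Set ℝ, MeasurableSet I →
      ∀ v ∈ ({1, -1} : Set ℝ), ∀ v' ∈ ({1, -1} : Set ℝ),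
        |∫ t in (0 : ℝ)..T, ∫ x in I, f t x v' * (gbar t x v' - gbar t x v)|
          ≤ 2 * Cφ * T * Real.exp (4 * CK * T) * ∫ x : ℝ, |μ₂ x - μ₁ x|) ∧
    (∀ (μseq : ℕ → ℝ → ℝ) (gseq : ℕ → ℝ → ℝ → ℝ → ℝ),
      (∀ m, Integrable (μseq m)) →
      (∀ m, IsMildG T K 1 (fun x _ => μ₂ x - μseq m x) (fun _ _ _ => 0) (gseq m)) →
      Tendsto (fun m => ∫ x : ℝ, |μ₂ x - μseq m x|) atTop (nhds 0) →
      ∀ I : Set ℝ, MeasurableSet I →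
        ∀ v ∈ ({1, -1} : Set ℝ), ∀ v' ∈ ({1, -1} : Set ℝ),
          Tendsto (fun m => ∫ t in (0 : ℝ)..T, ∫ x in I,
              f t x v' * (gseq m t x v' - gseq m t x v))
            atTop (nhds 0)) := by
  have hK : ∀ x v v', |K x v v'| ≤ CK := fun x v v' =>
    abs_le.2 ⟨by linarith [hK_nonneg x v v', hK_bdd x v v'], hK_bdd x v v'⟩
  have hφ : ∀ x v, |φ x v| ≤ Cφ := fun x v =>
    abs_le.2 ⟨by linarith [hφ_bds x v], (hφ_bds x v).2⟩
  refine ⟨fun I _ v hv v' hv' =>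
    abs_integral_setIntegral_mul_sub_le hT.le hK hφ hf hgbar I hv hv', ?_⟩
  intro μseq gseq _ hgseq hμseq I _ v hv v' hv'
  refine squeeze_zero_norm (fun m =>
    abs_integral_setIntegral_mul_sub_le hT.le hK hφ hf (hgseq m) I hv hv') ?_
  simpa using hμseq.const_mul (2 * Cφ * T * Real.exp (4 * CK * T))

/-- `L¹` closeness of measurement test functions implies closeness of the
adjoint-represented measurement gradients:
`|∫₀ᵀ∫_I f(v')(ḡ(v') − ḡ(v)) dx dt| ≤ 2 C_φ T e^{4C_K T} ‖μ₂ − μ₁‖_{L¹}`, where `ḡ` is the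
adjoint solution with final datum `μ₂ − μ₁`; in particular the gradient difference tends
to `0` along any sequence of test functions with `‖μ₂ − μ₁⁽ᵐ⁾‖_{L¹} → 0`. -/
theorem gradient_closeness_L1
    (T CK Cφ : ℝ) (hT : 0 < T) (hCK : 0 < CK) (hCφ : 0 ≤ Cφ)
    (K : ℝ → ℝ → ℝ → ℝ)
    (hK_nonneg : ∀ x v v', 0 ≤ K x v v') (hK_bdd : ∀ x v v', K x v v' ≤ CK)
    (φ : ℝ → ℝ → ℝ) (hφ_bds : ∀ x v, 0 ≤ φ x v ∧ φ x v ≤ Cφ)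
    (f : ℝ → ℝ → ℝ → ℝ) (hf : IsMildF T K φ (fun _ _ _ => 0) f)
    (μ₁ μ₂ : ℝ → ℝ) (hμ₁_int : Integrable μ₁) (hμ₂_int : Integrable μ₂)
    (gbar : ℝ → ℝ → ℝ → ℝ)
    (hgbar : IsMildG T K 1 (fun x _ => μ₂ x - μ₁ x) (fun _ _ _ => 0) gbar) :
    (∀ I : Set ℝ, MeasurableSet I →
      ∀ v ∈ ({1, -1} : Set ℝ), ∀ v' ∈ ({1, -1} : Set ℝ),
        |∫ t in (0 : ℝ)..T, ∫ x in I, f t x v' * (gbar t x v' - gbar t x v)|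
          ≤ 2 * Cφ * T * Real.exp (4 * CK * T) * ∫ x : ℝ, |μ₂ x - μ₁ x|) ∧
    (∀ (μseq : ℕ → ℝ → ℝ) (gseq : ℕ → ℝ → ℝ → ℝ → ℝ),
      (∀ m, Integrable (μseq m)) →
      (∀ m, IsMildG T K 1 (fun x _ => μ₂ x - μseq m x) (fun _ _ _ => 0) (gseq m)) →
      Tendsto (fun m => ∫ x : ℝ, |μ₂ x - μseq m x|) atTop (nhds 0) →
      ∀ I : Set ℝ, MeasurableSet I →
        ∀ v ∈ ({1, -1} : Set ℝ), ∀ v' ∈ ({1, -1} : Set ℝ),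
          Tendsto (fun m => ∫ t in (0 : ℝ)..T, ∫ x in I,
              f t x v' * (gseq m t x v' - gseq m t x v))
            atTop (nhds 0)) :=
  gradient_closeness_L1_general T CK Cφ hT K hK_nonneg hK_bdd φ hφ_bds f hf μ₁ μ₂ gbar hgbar
end
end

section
/- Decoupling under Design (D): let the interval [a₀, a_R) be divided into I_r = [a_{r−1}, a_r) with centers a_{r−1/2} = (a_{r−1}+a_r)/2, let 0 < d < min_r (a_r − a_{r−1})/4, 0 < d_μ ≤ d, and 0 < T < min_r ((a_r − a_{r−1})/4 − d/2). Let K be measurable with 0 ≤ K ≤ C_K. For each r, let φ_r be a bounded nonnegative measurable initial datum with φ_r(x,v) = 0 for all v whenever x ∉ a_{r−1/2} + [−d, d], let f_r be a bounded measurable mild solution of the homogeneous kinetic equation with initial datum φ_r, and let g_{r,i} (i = 1,2) be a bounded measurable mild solution of the adjoint kinetic equation with final datum equal to a scalar multiple of μ_{r,i} = C̄_μ 1_{[(−1)^i T − d_μ, (−1)^i T + d_μ] + a_{r−1/2}}. Then for all t ∈ [0,T] and v ∈ V, f_r(t,·,v) and g_{r,i}(t,·,v) vanish outside I_r; consequently,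 for every s ≠ r and all v, v' ∈ V: ∫₀^T ∫_{I_s} f_r(t,x,v') (g_{r,i}(t,x,v') − g_{r,i}(t,x,v)) dx dt = 0, so the adjoint-represented gradient entries of the measurement associated with interval I_r with respect to the kernel values on I_s vanish, and the Hessian of the loss is block diagonal with 2×2 blocks. -/
open MeasureTheory Real Set Filter

noncomputable section

/-! Finite speed of propagation. In the mild formulation, `f t x v` is the initial datum at
`x - v t` plus an integral of the collision term along the characteristic `s ↦ x - v (t - s)`;
since `|v| = 1`, this characteristic stays outside `closedBall c (ρ + s)` whenever
`x ∉ closedBall c (ρ + t)`. The collision term is at most `4 κ` times the size of the solution, so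
iterating the integral equation gives `|f| ≤ C (4 κ t) ^ n / n !` outside the cone for every `n`,
hence `f = 0` there; the adjoint solution is treated in the same way backwards from time `T`.
Under Design (D) both cones stay inside `I_r` up to time `T`, so the integrands of the cross
gradient entries over `I_s`, `s ≠ r`, vanish. -/

open Metric Topology
open scoped Nat

lemma eq_zero_of_forall_abs_le_pow_div_factorial {z C x : ℝ}
    (h : ∀ n : ℕ, |z| ≤ C * x ^ n / n !) : z = 0 := by
  have hlim : Tendsto (fun n : ℕ => C * x ^ n / n !) atTop (𝓝 0) := by
    simpa [mul_div_assoc] using (FloorSemiring.tendsto_pow_div_factorial_atTop x).const_mul C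
  exact abs_nonpos_iff.mp (ge_of_tendsto' hlim h)

lemma eqOn_zero_of_abs_le_pow_div_factorial_induction {α : Type*} {S : Set α} {u w : α → ℝ}
    {A C : ℝ} (hbdd : ∀ p ∈ S, |u p| ≤ C)
    (hstep : ∀ n : ℕ, (∀ p ∈ S, |u p| ≤ C * (A * w p) ^ n / n !) →
      ∀ p ∈ S, |u p| ≤ C * (A * w p) ^ (n + 1) / (n + 1)!) :
    EqOn u 0 S := by
  have hbound : ∀ n : ℕ, ∀ p ∈ S, |u p| ≤ C * (A * w p) ^ n / n ! := by
    intro n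
    induction n with
    | zero => simpa using hbdd
    | succ n ih => exact hstep n ih
  exact fun p hp => eq_zero_of_forall_abs_le_pow_div_factorial fun n => hbound n p hp

lemma integral_mul_pow_div_factorial (A C t : ℝ) (n : ℕ) :
    ∫ s in (0 : ℝ)..t, A * (C * (A * s) ^ n / n !) = C * (A * t) ^ (n + 1) / (n + 1)! := by
  have hn : (n ! : ℝ) ≠ 0 := by positivity
  simp_rw [mul_pow, show ∀ s : ℝ, A * (C * (A ^ n * s ^ n) / n !) = A ^ (n + 1) * C / n ! * s ^ n
    from fun s => by ring]
  rw [intervalIntegral.integral_const_mul, integral_pow, Nat.factorial_succ]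
  push_cast
  field_simp
  ring

lemma abs_integral_le_pow_div_factorial_succ {F : ℝ → ℝ} {A C t : ℝ} {n : ℕ} (ht : 0 ≤ t)
    (hF : ∀ s ∈ Ioc 0 t, |F s| ≤ A * (C * (A * s) ^ n / n !)) :
    |∫ s in (0 : ℝ)..t, F s| ≤ C * (A * t) ^ (n + 1) / (n + 1)! := by
  rw [← Real.norm_eq_abs, ← integral_mul_pow_div_factorial]
  exact intervalIntegral.norm_integral_le_of_norm_le ht (.of_forall hF)
    (Continuous.intervalIntegrable (by fun_prop) _ _)

lemma abs_integral_le_pow_div_factorial_succ_rev {F : ℝ → ℝ} {A C t T : ℝ} {n : ℕ}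
    (ht : t ≤ T) (hF : ∀ s ∈ Ico t T, |F s| ≤ A * (C * (A * (T - s)) ^ n / n !)) :
    |∫ s in t..T, F s| ≤ C * (A * (T - t)) ^ (n + 1) / (n + 1)! := by
  have hrev : ∫ s in t..T, F s = ∫ σ in (0 : ℝ)..T - t, F (T - σ) := by
    simp [intervalIntegral.integral_comp_sub_left]
  rw [hrev]
  refine abs_integral_le_pow_div_factorial_succ (sub_nonneg.mpr ht) fun σ hσ => ?_
  simpa using hF (T - σ) ⟨by linarith [hσ.2], by linarith [hσ.1]⟩

lemma abs_gain_sub_loss_le {κ M α k₁ k₂ k₃ k₄ a b c : ℝ} (h₁ : k₁ ∈ Icc 0 κ)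
    (h₂ : k₂ ∈ Icc 0 κ) (h₃ : k₃ ∈ Icc 0 κ) (h₄ : k₄ ∈ Icc 0 κ)
    (ha : |a| ≤ M) (hb : |b| ≤ M) (hc : |c| ≤ M) :
    |α * (k₁ * a + k₂ * b) - (k₃ + k₄) * c| ≤ 2 * (|α| + 1) * κ * M := by
  have hκ : 0 ≤ κ := h₁.1.trans h₁.2
  have hk : ∀ k ∈ Icc 0 κ, ∀ y, |y| ≤ M → |k * y| ≤ κ * M := fun k hk y hy => by
    rw [abs_mul, abs_of_nonneg hk.1]
    exact mul_le_mul hk.2 hy (abs_nonneg y) hκ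
  calc |α * (k₁ * a + k₂ * b) - (k₃ + k₄) * c|
      ≤ |α| * (|k₁ * a| + |k₂ * b|) + (|k₃ * c| + |k₄ * c|) := by
        refine (abs_sub _ _).trans (add_le_add ?_ ?_)
        · rw [abs_mul]; gcongr; exact abs_add_le _ _
        · rw [add_mul]; exact abs_add_le _ _
    _ ≤ |α| * (κ * M + κ * M) + (κ * M + κ * M) := by
        gcongr <;> apply hk <;> assumption
    _ = 2 * (|α| + 1) * κ * M := by ring

lemma notMem_closedBall_of_dist_le {x y c ρ δ : ℝ} (hx : x ∉ closedBall c (ρ + δ))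
    (hy : dist y x ≤ δ) : y ∉ closedBall c ρ := by
  rw [mem_closedBall, not_le] at *
  linarith [dist_triangle x y c, dist_comm x y]

lemma dist_add_mul_eq_abs {v : ℝ} (hv : v ∈ ({1, -1} : Set ℝ)) (x τ : ℝ) :
    dist (x + v * τ) x = |τ| := by
  rcases hv with rfl | rfl <;> simp

lemma dist_sub_mul_eq_abs {v : ℝ} (hv : v ∈ ({1, -1} : Set ℝ)) (x τ : ℝ) :
    dist (x - v * τ) x = |τ| := by
  rcases hv with rfl | rfl <;> simp

theorem IsMildF.eq_zero_of_notMem_closedBall {T κ ρ c : ℝ} {K : ℝ → ℝ → ℝ → ℝ}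
    {f₀ : ℝ → ℝ → ℝ} {f : ℝ → ℝ → ℝ → ℝ} (hK : ∀ x v v', K x v v' ∈ Icc 0 κ)
    (hf₀ : ∀ x ∉ closedBall c ρ, ∀ v, f₀ x v = 0) (hf : IsMildF T K f₀ (fun _ _ _ => 0) f) :
    ∀ t ∈ Icc 0 T, ∀ x ∉ closedBall c (ρ + t), ∀ v ∈ ({1, -1} : Set ℝ), f t x v = 0 := by
  obtain ⟨-, ⟨C, hC⟩, hf_eq⟩ := hf
  let S : Set (ℝ × ℝ × ℝ) :=
    {p | p.1 ∈ Icc 0 T ∧ p.2.1 ∉ closedBall c (ρ + p.1) ∧ p.2.2 ∈ ({1, -1} : Set ℝ)}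
  suffices EqOn (fun p : ℝ × ℝ × ℝ => f p.1 p.2.1 p.2.2) 0 S from
    fun t ht x hx v hv => this (x := (t, x, v)) ⟨ht, hx, hv⟩
  refine eqOn_zero_of_abs_le_pow_div_factorial_induction (w := Prod.fst) (A := 4 * κ)
    (fun p _ => hC _ _ _) fun n ih => ?_
  rintro ⟨t, x, v⟩ ⟨ht, hx, hv⟩
  have hchar : ∀ s ∈ Icc 0 t, x - v * (t - s) ∉ closedBall c (ρ + s) := fun s hs =>
    notMem_closedBall_of_dist_le (δ := t - s) (by rwa [add_add_sub_cancel])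
      ((dist_sub_mul_eq_abs hv x _).trans (abs_of_nonneg (sub_nonneg.2 hs.2))).le
  have hf₀0 : f₀ (x - v * t) v = 0 := hf₀ _ (by simpa using hchar 0 ⟨le_rfl, ht.1⟩) v
  have hcoll : ∀ s ∈ Ioc 0 t, |K (x - v * (t - s)) v 1 * f s (x - v * (t - s)) 1
      + K (x - v * (t - s)) v (-1) * f s (x - v * (t - s)) (-1)
      - (K (x - v * (t - s)) 1 v + K (x - v * (t - s)) (-1) v) * f s (x - v * (t - s)) v|
      ≤ 4 * κ * (C * (4 * κ * s) ^ n / n !) := by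
    intro s hs
    set y := x - v * (t - s)
    have hy : ∀ v' ∈ ({1, -1} : Set ℝ), |f s y v'| ≤ C * (4 * κ * s) ^ n / n ! := fun v' hv' =>
      ih (s, y, v') ⟨⟨hs.1.le, hs.2.trans ht.2⟩, hchar s ⟨hs.1.le, hs.2⟩, hv'⟩
    have := abs_gain_sub_loss_le (α := 1) (hK y v 1) (hK y v (-1)) (hK y 1 v) (hK y (-1) v)
      (hy 1 (by simp)) (hy (-1) (by simp)) (hy v hv)
    rw [one_mul, abs_one] at this
    linarith
  simp only [hf_eq t ht x v hv, hf₀0, add_zero, zero_add]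
  exact abs_integral_le_pow_div_factorial_succ ht.1 hcoll

theorem IsMildGb.eq_zero_of_notMem_closedBall {T κ α ρ c : ℝ} {K : ℝ → ℝ → ℝ → ℝ}
    {ψ : ℝ → ℝ → ℝ} {g : ℝ → ℝ → ℝ → ℝ} (hK : ∀ x v v', K x v v' ∈ Icc 0 κ)
    (hψ : ∀ x ∉ closedBall c ρ, ∀ v, ψ x v = 0) (hg : IsMildGb T K α ψ (fun _ _ _ => 0) g) :
    ∀ t ∈ Icc 0 T, ∀ x ∉ closedBall c (ρ + (T - t)), ∀ v ∈ ({1, -1} : Set ℝ),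
      g t x v = 0 := by
  obtain ⟨-, ⟨C, hC⟩, hg_eq⟩ := hg
  let S : Set (ℝ × ℝ × ℝ) :=
    {p | p.1 ∈ Icc 0 T ∧ p.2.1 ∉ closedBall c (ρ + (T - p.1)) ∧ p.2.2 ∈ ({1, -1} : Set ℝ)}
  suffices EqOn (fun p : ℝ × ℝ × ℝ => g p.1 p.2.1 p.2.2) 0 S from
    fun t ht x hx v hv => this (x := (t, x, v)) ⟨ht, hx, hv⟩
  refine eqOn_zero_of_abs_le_pow_div_factorial_induction (w := fun p => T - p.1)
    (A := 2 * (|α| + 1) * κ) (fun p _ => hC _ _ _) fun n ih => ?_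
  rintro ⟨t, x, v⟩ ⟨ht, hx, hv⟩
  have hchar : ∀ s ∈ Icc t T, x + v * (s - t) ∉ closedBall c (ρ + (T - s)) := fun s hs =>
    notMem_closedBall_of_dist_le (δ := s - t) (by rwa [add_assoc, sub_add_sub_cancel])
      ((dist_add_mul_eq_abs hv x _).trans (abs_of_nonneg (sub_nonneg.2 hs.1))).le
  have hψ0 : ψ (x + v * (T - t)) v = 0 := hψ _ (by simpa using hchar T ⟨ht.2, le_rfl⟩) v
  have hcoll : ∀ s ∈ Ico t T,
      |α * (K (x + v * (s - t)) 1 v * g s (x + v * (s - t)) 1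
          + K (x + v * (s - t)) (-1) v * g s (x + v * (s - t)) (-1))
        - (K (x + v * (s - t)) 1 v + K (x + v * (s - t)) (-1) v) * g s (x + v * (s - t)) v|
      ≤ 2 * (|α| + 1) * κ * (C * (2 * (|α| + 1) * κ * (T - s)) ^ n / n !) := by
    intro s hs
    set y := x + v * (s - t)
    have hy : ∀ v' ∈ ({1, -1} : Set ℝ),
        |g s y v'| ≤ C * (2 * (|α| + 1) * κ * (T - s)) ^ n / n ! := fun v' hv' =>
      ih (s, y, v') ⟨⟨ht.1.trans hs.1, hs.2.le⟩, hchar s ⟨hs.1, hs.2.le⟩, hv'⟩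
    exact abs_gain_sub_loss_le (hK y 1 v) (hK y (-1) v) (hK y 1 v) (hK y (-1) v)
      (hy 1 (by simp)) (hy (-1) (by simp)) (hy v hv)
  simp only [hg_eq t ht x v hv, hψ0, add_zero, zero_add]
  exact abs_integral_le_pow_div_factorial_succ_rev ht.2 hcoll

lemma disjoint_Ico_of_monotoneOn {β : Type*} [Preorder β] {a : ℕ → β} {R r s : ℕ}
    (ha : MonotoneOn a (Icc 0 R)) (hr : r ∈ Finset.Icc 1 R) (hs : s ∈ Finset.Icc 1 R)
    (hrs : r ≠ s) : Disjoint (Ico (a (r - 1)) (a r)) (Ico (a (s - 1)) (a s)) := by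
  wlog hlt : r < s generalizing r s
  · exact (this hs hr hrs.symm (by omega)).symm
  rw [Finset.mem_Icc] at hr hs
  have hle : a r ≤ a (s - 1) := ha ⟨r.zero_le, hr.2⟩ ⟨(s - 1).zero_le, by omega⟩ (by omega)
  exact Ico_disjoint_Ico_same.mono_right (Ico_subset_Ico_left hle)

theorem design_decoupling_general
    (T CK d dμ Cbμ : ℝ) (R r : ℕ)
    (hT : 0 < T) (hdμd : dμ ≤ d)
    (hr : r ∈ Finset.Icc 1 R)
    (a : ℕ → ℝ) (ha : StrictMonoOn a (Set.Icc (0 : ℕ) R))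
    (hT4 : ∀ s ∈ Finset.Icc 1 R, T < (a s - a (s - 1)) / 4 - d / 2)
    (K : ℝ → ℝ → ℝ → ℝ)
    (hK_nonneg : ∀ x v v', 0 ≤ K x v v') (hK_bdd : ∀ x v v', K x v v' ≤ CK)
    (φr : ℝ → ℝ → ℝ)
    (hφ_supp : ∀ x : ℝ,
      x ∉ Set.Icc ((a (r - 1) + a r) / 2 - d) ((a (r - 1) + a r) / 2 + d) →
      ∀ v, φr x v = 0)
    (fr : ℝ → ℝ → ℝ → ℝ) (hfr : IsMildF T K φr (fun _ _ _ => 0) fr)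
    (sg : ℝ) (hsg : sg ∈ ({1, -1} : Set ℝ)) (cscale : ℝ)
    (g : ℝ → ℝ → ℝ → ℝ)
    (hg : IsMildGb T K 1
      (fun x _ => cscale *
        (if x ∈ Set.Icc ((a (r - 1) + a r) / 2 + sg * T - dμ)
            ((a (r - 1) + a r) / 2 + sg * T + dμ) then Cbμ else 0))
      (fun _ _ _ => 0) g) :
    (∀ t ∈ Set.Icc (0 : ℝ) T, ∀ v ∈ ({1, -1} : Set ℝ), ∀ x : ℝ,
      x ∉ Set.Ico (a (r - 1)) (a r) → fr t x v = 0 ∧ g t x v = 0) ∧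
    (∀ s ∈ Finset.Icc 1 R, s ≠ r →
      ∀ v ∈ ({1, -1} : Set ℝ), ∀ v' ∈ ({1, -1} : Set ℝ),
        (∫ t in (0 : ℝ)..T, ∫ x in Set.Ico (a (s - 1)) (a s),
            fr t x v' * (g t x v' - g t x v)) = 0) := by
  set c := (a (r - 1) + a r) / 2 with hc
  have hK : ∀ x v v', K x v v' ∈ Icc 0 CK := fun x v v' => ⟨hK_nonneg x v v', hK_bdd x v v'⟩
  -- The adjoint cone is centred at distance `T` from `c`, hence the radius `d + 2 * T`.
  have hball : closedBall c (d + 2 * T) ⊆ Ico (a (r - 1)) (a r) := by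
    have := hT4 r hr
    rw [Real.closedBall_eq_Icc]
    exact fun x hx => ⟨by linarith [hx.1, hc], by linarith [hx.2, hc]⟩
  have hf0 := hfr.eq_zero_of_notMem_closedBall hK (fun x hx => hφ_supp x
    (by rwa [Real.closedBall_eq_Icc] at hx))
  have hg0 := hg.eq_zero_of_notMem_closedBall hK (c := c + sg * T) (ρ := dμ) fun x hx _ => by
    rw [Real.closedBall_eq_Icc] at hx
    simp [hx]
  have hsupp : ∀ t ∈ Icc 0 T, ∀ v ∈ ({1, -1} : Set ℝ), ∀ x ∉ Ico (a (r - 1)) (a r),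
      fr t x v = 0 ∧ g t x v = 0 := by
    intro t ht v hv x hx
    refine ⟨hf0 t ht x (fun hmem => hx (hball ?_)) v hv, hg0 t ht x (fun hmem => hx (hball ?_)) v hv⟩
    · exact closedBall_subset_closedBall (by linarith [ht.2]) hmem
    · refine closedBall_subset_closedBall' ?_ hmem
      rw [dist_add_mul_eq_abs hsg, abs_of_pos hT]
      linarith [ht.1]
  refine ⟨hsupp, fun s hs hsr v _ v' hv' => ?_⟩
  have hdisj := disjoint_Ico_of_monotoneOn ha.monotoneOn hs hr hsr
  have hzero : EqOn (fun t => ∫ x in Ico (a (s - 1)) (a s), fr t x v' * (g t x v' - g t x v)) 0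
      (uIcc 0 T) := fun t ht => by
    rw [uIcc_of_le hT.le] at ht
    refine setIntegral_eq_zero_of_forall_eq_zero fun x hx => ?_
    rw [(hsupp t ht v' hv' x (hdisj.notMem_of_mem_left hx)).1, zero_mul]
  simpa using intervalIntegral.integral_congr hzero

/-- decoupling under Design (D). With the partition `I_s = [a_{s−1}, a_s)`
of `[a₀,a_R)`, centers `c_r = (a_{r−1}+a_r)/2`, initial bump `φ_r` supported in
`c_r + [−d,d]` with `d < (a_s − a_{s−1})/4`, measurement windows of half-width `d_μ ≤ d`
centered at `c_r ± T`, and `T < (a_s − a_{s−1})/4 − d/2`, the forward solution `f_r` and the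
adjoint solutions `g_{r,i}` stay supported in `I_r`; consequently all cross gradient
entries over `I_s`, `s ≠ r`, vanish (block-diagonal Hessian). -/
theorem design_decoupling
    (T CK d dμ Cbμ : ℝ) (R r : ℕ)
    (hT : 0 < T) (hCK : 0 < CK) (hd : 0 < d) (hdμ0 : 0 < dμ) (hdμd : dμ ≤ d)
    (hCbμ : 0 < Cbμ)
    (hr : r ∈ Finset.Icc 1 R)
    (a : ℕ → ℝ) (ha : StrictMonoOn a (Set.Icc (0 : ℕ) R))
    (hd4 : ∀ s ∈ Finset.Icc 1 R, d < (a s - a (s - 1)) / 4)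
    (hT4 : ∀ s ∈ Finset.Icc 1 R, T < (a s - a (s - 1)) / 4 - d / 2)
    (K : ℝ → ℝ → ℝ → ℝ)
    (hK_nonneg : ∀ x v v', 0 ≤ K x v v') (hK_bdd : ∀ x v v', K x v v' ≤ CK)
    (φr : ℝ → ℝ → ℝ)
    (hφ_meas : Measurable fun p : ℝ × ℝ => φr p.1 p.2)
    (hφ_nonneg : ∀ x v, 0 ≤ φr x v) (hφ_bdd : ∃ C, ∀ x v, φr x v ≤ C)
    (hφ_supp : ∀ x : ℝ,
      x ∉ Set.Icc ((a (r - 1) + a r) / 2 - d) ((a (r - 1) + a r) / 2 + d) →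
      ∀ v, φr x v = 0)
    (fr : ℝ → ℝ → ℝ → ℝ) (hfr : IsMildF T K φr (fun _ _ _ => 0) fr)
    (sg : ℝ) (hsg : sg ∈ ({1, -1} : Set ℝ)) (cscale : ℝ)
    (g : ℝ → ℝ → ℝ → ℝ)
    (hg : IsMildGb T K 1
      (fun x _ => cscale *
        (if x ∈ Set.Icc ((a (r - 1) + a r) / 2 + sg * T - dμ)
            ((a (r - 1) + a r) / 2 + sg * T + dμ) then Cbμ else 0))
      (fun _ _ _ => 0) g) :
    (∀ t ∈ Set.Icc (0 : ℝ) T, ∀ v ∈ ({1, -1} : Set ℝ), ∀ x : ℝ,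
      x ∉ Set.Ico (a (r - 1)) (a r) → fr t x v = 0 ∧ g t x v = 0) ∧
    (∀ s ∈ Finset.Icc 1 R, s ≠ r →
      ∀ v ∈ ({1, -1} : Set ℝ), ∀ v' ∈ ({1, -1} : Set ℝ),
        (∫ t in (0 : ℝ)..T, ∫ x in Set.Ico (a (s - 1)) (a s),
            fr t x v' * (g t x v' - g t x v)) = 0) :=
  design_decoupling_general T CK d dμ Cbμ R r hT hdμd hr a ha hT4 K hK_nonneg hK_bdd φr hφ_supp fr
    hfr sg hsg cscale g hg
end
end
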